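/- Let B₁ be a rare basis of two-dimensional intervals satisfying the (is)-property and let B₂ be a translation-invariant collection of one-dimensional intervals whose lengths form an infinite set of dyadic numbers, and set B = B₁×B₂ = {J₁×J₂ : J₁ ∈ B₁, J₂ ∈ B₂} in ℝ³. Then there is a constant c > 0 such that for every α ∈ (0,1) there exists a bounded measurable set E ⊂ ℝ³ of positive Lebesgue measure with |{x ∈ ℝ³ : M_B(χ_E)(x) > α}| ≥ c · (1/α) · (1 + log(1/α))² · |E|. -/

import Mathlib

open MeasureTheory Set
open scoped ENNReal

noncomputable section

/-- An axis-parallel interval (box) in `ℝⁿ`, given by its left and right endpoints. -/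
structure BoxInterval (n : ℕ) where
  a : Fin n → ℝ
  b : Fin n → ℝ
  hab : ∀ j, a j < b j

namespace BoxInterval

/-- The underlying set of a box. -/
def toSet {n : ℕ} (R : BoxInterval n) : Set (Fin n → ℝ) :=
  Set.univ.pi fun j => Set.Icc (R.a j) (R.b j)

/-- The side length of a box in direction `j`. -/
def side {n : ℕ} (R : BoxInterval n) (j : Fin n) : ℝ := R.b j - R.a j

/-- Translation of a box by a vector `v`. -/
def translate {n : ℕ} (R : BoxInterval n) (v : Fin n → ℝ) : BoxInterval n where
  a := fun j => R.a j + v j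
  b := fun j => R.b j + v j
  hab := fun j => by linarith [R.hab j]

end BoxInterval

/-- A rare basis in `ℝⁿ`: a nonempty translation-invariant collection of intervals. -/
def IsRareBasis {n : ℕ} (B : Set (BoxInterval n)) : Prop :=
  B.Nonempty ∧ ∀ R ∈ B, ∀ v : Fin n → ℝ, R.translate v ∈ B

/-- The geometric maximal operator `M_B` associated with a collection `B` of boxes:
`M_B f (x) = sup { (1/|R|) ∫_R |f| : x ∈ R ∈ B }`. -/
def maxOp {n : ℕ} (B : Set (BoxInterval n)) (f : (Fin n → ℝ) → ℝ)
    (x : Fin n → ℝ) : ℝ≥0∞ :=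
  ⨆ (R : BoxInterval n) (_ : R ∈ B) (_ : x ∈ R.toSet),
    (∫⁻ y in R.toSet, ENNReal.ofReal |f y| ∂volume) / volume R.toSet

/-- The spectrum `W_B ⊂ ℤⁿ` of a collection of boxes: all tuples
`(⌈log₂ |R₁|⌉, …, ⌈log₂ |Rₙ|⌉)` over boxes `R₁ × ⋯ × Rₙ ∈ B`. -/
def spectrumB {n : ℕ} (B : Set (BoxInterval n)) : Set (Fin n → ℤ) :=
  {w | ∃ R ∈ B, ∀ j, w j = ⌈Real.logb 2 (R.side j)⌉}

/-- The slice `W_t` of `W ⊂ ℤ^{k+1}` over `t ∈ ℤᵏ`. -/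
def sliceZ {k : ℕ} (W : Set (Fin (k + 1) → ℤ)) (t : Fin k → ℤ) : Set ℤ :=
  {τ | Fin.snoc t τ ∈ W}

/-- `W` is a net for `S` in `ℤ^{k+1}`: every slice of `W` is a one-dimensional
net for the corresponding slice of `S`. -/
def IsNetMulti {k : ℕ} (W S : Set (Fin (k + 1) → ℤ)) : Prop :=
  ∀ t : Fin k → ℤ, ∃ N : ℕ, ∀ τ ∈ sliceZ S t, ∃ w ∈ sliceZ W t, |τ - w| ≤ (N : ℤ)

/-- Projection of `W ⊂ ℤⁿ` onto the first `k` coordinates. -/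
def projZ {n : ℕ} (k : ℕ) (hk : k ≤ n) (W : Set (Fin n → ℤ)) : Set (Fin k → ℤ) :=
  (fun w (i : Fin k) => w (Fin.castLE hk i)) '' W

/-- `W ⊂ ℤⁿ` is dense in `S₁ × ⋯ × Sₙ`: for each `k`, `π_{k+1}(W)` is a net for
`π_k(W) × S_{k+1}`. -/
def IsDenseIn {n : ℕ} (W : Set (Fin n → ℤ)) (S : Fin n → Set ℤ) : Prop :=
  ∀ k : Fin n,
    IsNetMulti (projZ (k.val + 1) k.isLt W)
      {v : Fin (k.val + 1) → ℤ |
        Fin.init v ∈ projZ k.val (Nat.le_of_lt k.isLt) W ∧ v (Fin.last k.val) ∈ S k}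

/-- `Ω_{n,k}`: the set of `n`-tuples of positive integers summing to `k`. -/
def OmegaNK (n k : ℕ) : Set (Fin n → ℕ) :=
  {m | (∀ j, 1 ≤ m j) ∧ ∑ j, m j = k}

/-- The smallest box concentric with `R`, containing `R`, with dyadic side lengths. -/
def dyadicHull {n : ℕ} (R : BoxInterval n) : BoxInterval n where
  a := fun j => (R.a j + R.b j) / 2 - (2:ℝ) ^ ⌈Real.logb 2 (R.side j)⌉ / 2
  b := fun j => (R.a j + R.b j) / 2 + (2:ℝ) ^ ⌈Real.logb 2 (R.side j)⌉ / 2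
  hab := fun j => by
    have h : (0:ℝ) < (2:ℝ) ^ ⌈Real.logb 2 (R.side j)⌉ := by positivity
    linarith

/-- The dyadic skeleton `B_d` of a collection `B`. -/
def dyadicSkeleton {n : ℕ} (B : Set (BoxInterval n)) : Set (BoxInterval n) :=
  {Rd | ∃ R ∈ B, Rd = dyadicHull R}

/-- `B` is `Ω`-complete (for `Ω ⊆ Ω_{n,k}`). -/
def OmegaComplete {n : ℕ} (B : Set (BoxInterval n)) (k : ℕ) (Ω : Set (Fin n → ℕ)) : Prop :=
  ∃ s : Fin n → ℕ → ℤ,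
    (∀ j, ∀ m, m < k → s j m < s j (m + 1)) ∧
    ∀ m ∈ Ω, ∃ R ∈ dyadicSkeleton B, ∀ j,
      R.side j ∈ Set.Ioc ((2:ℝ) ^ s j (m j - 1)) ((2:ℝ) ^ s j (m j))

/-- Product of an `n`-dimensional box and a one-dimensional box. -/
def prodBox {n : ℕ} (J1 : BoxInterval n) (J2 : BoxInterval 1) : BoxInterval (n + 1) where
  a := Fin.snoc J1.a (J2.a 0)
  b := Fin.snoc J1.b (J2.b 0)
  hab := fun j => by
    induction j using Fin.lastCases with
    | last => simpa using J2.hab 0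
    | cast i => simpa using J1.hab i

/-- The product basis `B₁ × B₂`. -/
def prodBasis {n : ℕ} (B1 : Set (BoxInterval n)) (B2 : Set (BoxInterval 1)) :
    Set (BoxInterval (n + 1)) :=
  {R | ∃ J1 ∈ B1, ∃ J2 ∈ B2, R = prodBox J1 J2}

/-- The (is)-property of a rare basis in `ℝ²`. -/
def ISProperty (B : Set (BoxInterval 2)) : Prop :=
  ∀ k : ℕ, ∃ R : Fin (k + 1) → BoxInterval 2,
    (∀ i, R i ∈ B) ∧
    (∀ i, (R i).a = fun _ => 0) ∧
    (∀ i, ∃ pq : Fin 2 → ℤ, ∀ l, (R i).b l = (2:ℝ) ^ pq l) ∧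
    (∀ i j, i ≠ j → ∀ v : Fin 2 → ℝ, ¬ ((R i).translate v).toSet ⊆ (R j).toSet) ∧
    (∀ i j, ∃ Q ∈ B, Q.toSet = (R i).toSet ∩ (R j).toSet)

/-!
For scales `2 ^ p 0 < ⋯ < 2 ^ p k`, the set `cantorSet p k ⊆ [0, 2 ^ p k]` is built from
`[0, 2 ^ p 0]` by repeatedly laying `2 ^ (p (n+1) - p n - 1)` copies side by side with period
`2 ^ (p n + 1)`. It has measure `2 ^ (p k - k)`, and every point of the union `cantorWindows p k i`
of its level-`i` windows (of measure `2 ^ (p k - k + i)`) lies in a window of length `2 ^ p i`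
in which the Cantor set has density `2 ^ (-i)`.

The (is)-property yields increasing `p` and decreasing `q` with
`[0, 2 ^ p i] × [0, 2 ^ q j] ∈ B₁` for `i ≤ j`, and `B₂` yields increasing dyadic lengths
`2 ^ s l`. Let `E` be the product of the Cantor sets built on `p`, on `q` reversed and on `s`.
A point whose coordinates lie in windows of levels `i`, `j`, `k - i - j` lies in a box of
`B₁ × B₂` in which `E` has density `2 ^ (-k)`. The windows of levels `i, j ≤ k / 2` minus those
of the previous levels give `(k / 2 + 1) ^ 2` disjoint blocks, each of measure at least
`2 ^ (k - 2) |E|`; taking `2 ^ (-k)` just above `α` gives the bound.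
-/

open scoped Pointwise

namespace DyadicCantor

def spread (m m' : ℤ) (S : Set ℝ) : Set ℝ :=
  ⋃ t ∈ Finset.range (2 ^ (m' - m - 1).toNat), ((t : ℝ) * 2 ^ (m + 1)) +ᵥ S

lemma two_zpow_succ (m : ℤ) : (2 : ℝ) ^ (m + 1) = 2 * 2 ^ m := by
  rw [zpow_add_one₀ two_ne_zero, mul_comm]

lemma natCast_two_pow_toNat {z : ℤ} (hz : 0 ≤ z) : ((2 ^ z.toNat : ℕ) : ℝ) = 2 ^ z := by
  rw [Nat.cast_pow, Nat.cast_ofNat, ← zpow_natCast, Int.toNat_of_nonneg hz]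

lemma natCast_two_pow_toNat_mul {m m' : ℤ} (h : m < m') :
    ((2 ^ (m' - m - 1).toNat : ℕ) : ℝ) * 2 ^ (m + 1) = 2 ^ m' := by
  rw [natCast_two_pow_toNat (by omega), ← zpow_add₀ two_ne_zero]
  congr 1
  ring

lemma offset_add_le {m m' : ℤ} (h : m < m') {t : ℕ} (ht : t < 2 ^ (m' - m - 1).toNat) :
    (t : ℝ) * 2 ^ (m + 1) + 2 ^ (m + 1) ≤ 2 ^ m' := by
  have ht' : (t : ℝ) + 1 ≤ ((2 ^ (m' - m - 1).toNat : ℕ) : ℝ) := by exact_mod_cast ht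
  rw [← natCast_two_pow_toNat_mul h]
  nlinarith [zpow_pos (two_pos : (0 : ℝ) < 2) (m + 1)]

lemma eq_of_offset_add_mem_Icc {m : ℤ} {t t' : ℕ} {y : ℝ} (hy : y ∈ Icc 0 ((2 : ℝ) ^ m))
    (h : (t' : ℝ) * 2 ^ (m + 1) + y ∈ Icc ((t : ℝ) * 2 ^ (m + 1)) (t * 2 ^ (m + 1) + 2 ^ m)) :
    t' = t := by
  have hm : (0 : ℝ) < 2 ^ m := zpow_pos two_pos m
  rw [two_zpow_succ] at h
  have h₁ : (t' : ℝ) < t + 1 := by nlinarith [hy.1, h.2]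
  have h₂ : (t : ℝ) < t' + 1 := by nlinarith [hy.2, h.1]
  have h₁' : t' < t + 1 := by exact_mod_cast h₁
  have h₂' : t < t' + 1 := by exact_mod_cast h₂
  omega

variable {m m' : ℤ} {S W : Set ℝ}

lemma measurableSet_spread (hS : MeasurableSet S) : MeasurableSet (spread m m' S) :=
  .biUnion (Finset.range _).countable_toSet fun _ _ => hS.const_vadd _

lemma spread_mono (h : S ⊆ W) : spread m m' S ⊆ spread m m' W :=
  iUnion₂_mono fun _ _ => vadd_set_mono h

lemma spread_subset_Icc (h : m < m') (hS : S ⊆ Icc 0 (2 ^ m)) :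
    spread m m' S ⊆ Icc 0 (2 ^ m') := by
  simp only [spread, iUnion_subset_iff, Finset.mem_range]
  rintro t ht _ ⟨y, hy, rfl⟩
  have := offset_add_le h ht
  have : (2 : ℝ) ^ m ≤ 2 ^ (m + 1) := zpow_le_zpow_right₀ one_le_two (by omega)
  have : (0 : ℝ) ≤ t * 2 ^ (m + 1) := by positivity
  simp only [vadd_eq_add]
  exact ⟨by linarith [(hS hy).1], by linarith [(hS hy).2]⟩

lemma vadd_subset_spread {t : ℕ} (ht : t < 2 ^ (m' - m - 1).toNat) :
    ((t : ℝ) * 2 ^ (m + 1)) +ᵥ S ⊆ spread m m' S :=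
  subset_biUnion_of_mem (u := fun t : ℕ => ((t : ℝ) * 2 ^ (m + 1)) +ᵥ S) (by simpa using ht)

lemma spread_inter_vadd (hS : S ⊆ Icc 0 (2 ^ m)) (hW : W ⊆ Icc 0 (2 ^ m)) {t : ℕ}
    (ht : t < 2 ^ (m' - m - 1).toNat) :
    spread m m' S ∩ (((t : ℝ) * 2 ^ (m + 1)) +ᵥ W) =
      ((t : ℝ) * 2 ^ (m + 1)) +ᵥ (S ∩ W) := by
  refine Subset.antisymm ?_ ?_
  · rintro _ ⟨hz, w, hw, rfl⟩
    simp only [spread, mem_iUnion, Finset.mem_range] at hz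
    obtain ⟨t', -, y, hy, hyw⟩ := hz
    simp only [vadd_eq_add] at hyw ⊢
    have htt' : t' = t := by
      refine eq_of_offset_add_mem_Icc (hS hy) ?_
      rw [hyw]
      exact ⟨by linarith [(hW hw).1], by linarith [(hW hw).2]⟩
    subst htt'
    obtain rfl : y = w := by linarith
    exact ⟨y, ⟨hy, hw⟩, rfl⟩
  · rw [vadd_set_inter]
    exact inter_subset_inter_left _ (vadd_subset_spread ht)

lemma volume_spread (hS : S ⊆ Icc 0 (2 ^ m)) (hSm : MeasurableSet S) :
    volume (spread m m' S) = (2 ^ (m' - m - 1).toNat : ℕ) * volume S := by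
  rw [spread, measure_biUnion_finset]
  · simp [measure_vadd]
  · intro t _ t' _ htt'
    refine Set.disjoint_left.2 ?_
    rintro _ ⟨y, hy, rfl⟩ ⟨y', hy', hyy'⟩
    simp only [vadd_eq_add] at hyy'
    refine htt' (eq_of_offset_add_mem_Icc (hS hy') ?_).symm
    rw [hyy']
    exact ⟨by linarith [(hS hy).1], by linarith [(hS hy).2]⟩
  · exact fun t _ => hSm.const_vadd _

def spreadIter (p : ℕ → ℤ) (i : ℕ) (S : Set ℝ) : ℕ → Set ℝ
  | 0 => S
  | n + 1 => spread (p (i + n)) (p (i + n + 1)) (spreadIter p i S n)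

variable {p : ℕ → ℤ} {i : ℕ}

lemma spreadIter_subset_Icc (hp : StrictMono p) (hS : S ⊆ Icc 0 (2 ^ p i)) :
    ∀ n, spreadIter p i S n ⊆ Icc 0 (2 ^ p (i + n))
  | 0 => hS
  | n + 1 => spread_subset_Icc (hp (Nat.lt_succ_self _)) (spreadIter_subset_Icc hp hS n)

lemma measurableSet_spreadIter (hS : MeasurableSet S) :
    ∀ n, MeasurableSet (spreadIter p i S n)
  | 0 => hS
  | n + 1 => measurableSet_spread (measurableSet_spreadIter hS n)

lemma volume_spreadIter (hp : StrictMono p) (hS : S ⊆ Icc 0 (2 ^ p i)) (hSm : MeasurableSet S) :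
    ∀ n, volume (spreadIter p i S n) = ENNReal.ofReal (2 ^ (p (i + n) - p i - n)) * volume S
  | 0 => by simp [spreadIter]
  | n + 1 => by
    have hlt : p (i + n) < p (i + n + 1) := hp (Nat.lt_succ_self _)
    rw [spreadIter, volume_spread (spreadIter_subset_Icc hp hS n) (measurableSet_spreadIter hSm n),
      volume_spreadIter hp hS hSm n, ← mul_assoc, ← ENNReal.ofReal_natCast,
      ← ENNReal.ofReal_mul (by positivity), natCast_two_pow_toNat (by omega),
      ← zpow_add₀ two_ne_zero]
    congr 3
    push_cast
    ring_nf

lemma spreadIter_add (i n : ℕ) : ∀ l, spreadIter p i S (n + l) =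
    spreadIter p (i + n) (spreadIter p i S n) l
  | 0 => rfl
  | l + 1 => by
    rw [← add_assoc, spreadIter, spreadIter_add i n l, spreadIter]
    simp only [add_assoc]

lemma spreadIter_Icc_succ_subset (hp : StrictMono p) (i : ℕ) :
    ∀ n, spreadIter p i (Icc 0 (2 ^ p i)) (n + 1) ⊆
      spreadIter p (i + 1) (Icc 0 (2 ^ p (i + 1))) n
  | 0 => spread_subset_Icc (hp (Nat.lt_succ_self _)) subset_rfl
  | n + 1 => by
    rw [spreadIter, spreadIter, show i + (n + 1) = i + 1 + n by omega]
    exact spread_mono (spreadIter_Icc_succ_subset hp i n)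

lemma exists_window_of_mem_spreadIter (hp : StrictMono p) (hS : S ⊆ Icc 0 (2 ^ p i)) :
    ∀ n, ∀ x ∈ spreadIter p i (Icc 0 (2 ^ p i)) n, ∃ τ : ℝ,
      τ +ᵥ Icc (0 : ℝ) (2 ^ p i) ⊆ Icc 0 (2 ^ p (i + n)) ∧
      x ∈ τ +ᵥ Icc (0 : ℝ) (2 ^ p i) ∧
      volume (spreadIter p i S n ∩ (τ +ᵥ Icc (0 : ℝ) (2 ^ p i))) = volume S
  | 0, x, hx =>
    ⟨0, by simp, by simpa [spreadIter] using hx, by simp [spreadIter, inter_eq_left.2 hS]⟩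
  | n + 1, _, hx => by
    simp only [spreadIter, spread, mem_iUnion, Finset.mem_range] at hx
    obtain ⟨t, ht, y, hy, rfl⟩ := hx
    obtain ⟨τ, hτ, hyτ, hvol⟩ := exists_window_of_mem_spreadIter hp hS n y hy
    set c : ℝ := (t : ℝ) * 2 ^ (p (i + n) + 1)
    refine ⟨c + τ, ?_, ?_, ?_⟩
    · rw [← vadd_vadd]
      exact (vadd_subset_spread ht).trans (spread_subset_Icc (hp (Nat.lt_succ_self _)) hτ)
    · rw [← vadd_vadd]
      exact vadd_mem_vadd_set hyτ
    · rw [← vadd_vadd, spreadIter, spread_inter_vadd (spreadIter_subset_Icc hp hS n) hτ ht,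
        measure_vadd, hvol]

def cantorSet (p : ℕ → ℤ) (k : ℕ) : Set ℝ := spreadIter p 0 (Icc 0 (2 ^ p 0)) k

def cantorWindows (p : ℕ → ℤ) (k i : ℕ) : Set ℝ :=
  spreadIter p i (Icc 0 (2 ^ p i)) (k - i)

variable {k : ℕ}

lemma measurableSet_cantorSet (k : ℕ) : MeasurableSet (cantorSet p k) :=
  measurableSet_spreadIter measurableSet_Icc k

lemma measurableSet_cantorWindows (k i : ℕ) : MeasurableSet (cantorWindows p k i) :=
  measurableSet_spreadIter measurableSet_Icc _

lemma cantorSet_subset_Icc (hp : StrictMono p) (k : ℕ) : cantorSet p k ⊆ Icc 0 (2 ^ p k) := by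
  simpa only [zero_add, cantorSet] using spreadIter_subset_Icc hp (i := 0) subset_rfl k

lemma cantorSet_eq_spreadIter (hi : i ≤ k) :
    cantorSet p k = spreadIter p i (cantorSet p i) (k - i) := by
  simpa only [Nat.add_sub_cancel' hi, zero_add, cantorSet] using spreadIter_add (p := p) 0 i (k - i)

lemma volume_Icc_two_zpow (z : ℤ) : volume (Icc (0 : ℝ) (2 ^ z)) = ENNReal.ofReal (2 ^ z) := by
  rw [Real.volume_Icc, sub_zero]

lemma volume_cantorSet (hp : StrictMono p) (k : ℕ) :
    volume (cantorSet p k) = ENNReal.ofReal (2 ^ (p k - k)) := by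
  rw [cantorSet, volume_spreadIter hp subset_rfl measurableSet_Icc, volume_Icc_two_zpow,
    ← ENNReal.ofReal_mul (by positivity), ← zpow_add₀ two_ne_zero, zero_add]
  congr 2
  ring

lemma volume_cantorWindows (hp : StrictMono p) (hi : i ≤ k) :
    volume (cantorWindows p k i) = ENNReal.ofReal (2 ^ (p k - k + i)) := by
  rw [cantorWindows, volume_spreadIter hp subset_rfl measurableSet_Icc, volume_Icc_two_zpow,
    ← ENNReal.ofReal_mul (by positivity), ← zpow_add₀ two_ne_zero, Nat.add_sub_cancel' hi]
  congr 2
  push_cast [hi]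
  ring

lemma monotone_cantorWindows (hp : StrictMono p) (k : ℕ) : Monotone (cantorWindows p k) := by
  refine monotone_nat_of_le_succ fun i => ?_
  rcases lt_or_ge i k with hik | hki
  · rw [cantorWindows, cantorWindows, show k - i = k - (i + 1) + 1 by omega]
    exact spreadIter_Icc_succ_subset hp i _
  · rw [cantorWindows, cantorWindows, Nat.sub_eq_zero_of_le hki, Nat.sub_eq_zero_of_le (by omega)]
    exact Icc_subset_Icc_right (zpow_le_zpow_right₀ one_le_two (hp (Nat.lt_succ_self i)).le)

lemma exists_window_of_mem_cantorWindows (hp : StrictMono p) (hi : i ≤ k) {x : ℝ}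
    (hx : x ∈ cantorWindows p k i) : ∃ τ : ℝ, x ∈ τ +ᵥ Icc (0 : ℝ) (2 ^ p i) ∧
      volume (cantorSet p k ∩ (τ +ᵥ Icc (0 : ℝ) (2 ^ p i))) =
        ENNReal.ofReal (2 ^ (p i - i)) := by
  obtain ⟨τ, -, hxτ, hvol⟩ :=
    exists_window_of_mem_spreadIter hp (cantorSet_subset_Icc hp i) (k - i) x hx
  refine ⟨τ, hxτ, ?_⟩
  rwa [← cantorSet_eq_spreadIter hi, volume_cantorSet hp] at hvol

lemma volume_disjointed_cantorWindows_ge (hp : StrictMono p) (hi : i ≤ k) :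
    ENNReal.ofReal (2 ^ (p k - k + i - 1)) ≤ volume (disjointed (cantorWindows p k) i) := by
  cases i with
  | zero =>
    rw [disjointed_zero, volume_cantorWindows hp hi]
    exact ENNReal.ofReal_le_ofReal (zpow_le_zpow_right₀ one_le_two (by omega))
  | succ i =>
    have hmono := monotone_cantorWindows hp k
    have hsucc := hmono.disjointed_succ (not_isMax i)
    rw [Order.succ_eq_add_one] at hsucc
    rw [hsucc, measure_sdiff (hmono (Nat.le_add_right i 1))
        (measurableSet_cantorWindows k i).nullMeasurableSet
        (by rw [volume_cantorWindows hp (by omega)]; exact ENNReal.ofReal_ne_top),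
      volume_cantorWindows hp hi, volume_cantorWindows hp (by omega),
      ← ENNReal.ofReal_sub _ (by positivity)]
    refine ENNReal.ofReal_le_ofReal (le_of_eq ?_)
    rw [show p k - k + ↑(i + 1) = p k - k + i + 1 by push_cast; ring, zpow_add_one₀ two_ne_zero]
    ring_nf

end DyadicCantor

open DyadicCantor

namespace BoxInterval

variable {n : ℕ}

lemma ext {R S : BoxInterval n} (ha : R.a = S.a) (hb : R.b = S.b) : R = S := by
  cases R; cases S; congr

lemma toSet_eq_Icc (R : BoxInterval n) : R.toSet = Icc R.a R.b := pi_univ_Icc _ _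

lemma toSet_injective : Function.Injective (toSet (n := n)) := fun R S h => by
  rw [toSet_eq_Icc, toSet_eq_Icc, Icc_eq_Icc_iff fun j => (R.hab j).le] at h
  exact ext h.1 h.2

@[simp]
lemma translate_zero (R : BoxInterval n) : R.translate 0 = R :=
  ext (funext fun _ => add_zero _) (funext fun _ => add_zero _)

end BoxInterval

def dyadicCornerBox {n : ℕ} (s : Fin n → ℤ) : BoxInterval n where
  a := fun _ => 0
  b := fun j => 2 ^ s j
  hab := fun _ => by positivity

section DyadicCornerBox

variable {n : ℕ}

lemma toSet_dyadicCornerBox (s : Fin n → ℤ) :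
    (dyadicCornerBox s).toSet = univ.pi fun j => Icc 0 (2 ^ s j) := rfl

lemma toSet_dyadicCornerBox_mono {s s' : Fin n → ℤ} (h : s ≤ s') :
    (dyadicCornerBox s).toSet ⊆ (dyadicCornerBox s').toSet :=
  pi_mono fun j _ => Icc_subset_Icc_right (zpow_le_zpow_right₀ one_le_two (h j))

lemma toSet_dyadicCornerBox_inter (s s' : Fin n → ℤ) :
    (dyadicCornerBox s).toSet ∩ (dyadicCornerBox s').toSet =
      (dyadicCornerBox (s ⊓ s')).toSet := by
  simp only [toSet_dyadicCornerBox, ← pi_inter_distrib, Icc_inter_Icc, sup_idem, Pi.inf_apply]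
  congr! with j
  exact ((zpow_right_strictMono₀ one_lt_two).monotone.map_min).symm

lemma Icc_translate_dyadicCornerBox (s : Fin n → ℤ) (τ : Fin n → ℝ) (j : Fin n) :
    Icc (((dyadicCornerBox s).translate τ).a j) (((dyadicCornerBox s).translate τ).b j) =
      τ j +ᵥ Icc (0 : ℝ) (2 ^ s j) := by
  simp only [BoxInterval.translate, dyadicCornerBox, vadd_Icc, add_comm]

lemma toSet_translate_dyadicCornerBox (s : Fin n → ℤ) (τ : Fin n → ℝ) :
    ((dyadicCornerBox s).translate τ).toSet = univ.pi fun j => τ j +ᵥ Icc (0 : ℝ) (2 ^ s j) :=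
  congrArg _ (funext (Icc_translate_dyadicCornerBox s τ))

lemma prodBox_dyadicCornerBox (u v w : ℤ) :
    prodBox (dyadicCornerBox ![u, v]) (dyadicCornerBox ![w]) = dyadicCornerBox ![u, v, w] := by
  refine BoxInterval.ext (funext fun j => ?_) (funext fun j => ?_) <;>
    fin_cases j <;> simp [prodBox, dyadicCornerBox, Fin.snoc]

end DyadicCornerBox

lemma prodBox_translate {n : ℕ} (J1 : BoxInterval n) (J2 : BoxInterval 1)
    (v : Fin (n + 1) → ℝ) :
    (prodBox J1 J2).translate v =
      prodBox (J1.translate (Fin.init v)) (J2.translate fun _ => v (Fin.last n)) := by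
  refine BoxInterval.ext (funext fun j => ?_) (funext fun j => ?_) <;>
    induction j using Fin.lastCases <;> simp [BoxInterval.translate, prodBox, Fin.init]

lemma translate_prodBox_mem_prodBasis {n : ℕ} {B1 : Set (BoxInterval n)}
    {B2 : Set (BoxInterval 1)} (hB1 : ∀ R ∈ B1, ∀ v, R.translate v ∈ B1)
    (hB2 : ∀ I ∈ B2, ∀ v, I.translate v ∈ B2) {J1 : BoxInterval n} {J2 : BoxInterval 1}
    (hJ1 : J1 ∈ B1) (hJ2 : J2 ∈ B2) (v : Fin (n + 1) → ℝ) :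
    (prodBox J1 J2).translate v ∈ prodBasis B1 B2 := by
  rw [prodBox_translate]
  exact ⟨_, hB1 _ hJ1 _, _, hB2 _ hJ2 _, rfl⟩

lemma measure_inter_div_le_maxOp {n : ℕ} {B : Set (BoxInterval n)} {E : Set (Fin n → ℝ)}
    (hE : MeasurableSet E) {R : BoxInterval n} (hR : R ∈ B) {x : Fin n → ℝ}
    (hx : x ∈ R.toSet) :
    volume (E ∩ R.toSet) / volume R.toSet ≤ maxOp B (E.indicator fun _ => 1) x := by
  refine le_iSup_of_le R (le_iSup_of_le hR (le_iSup_of_le hx (le_of_eq ?_)))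
  have h1 : (fun y => ENNReal.ofReal |E.indicator (fun _ => (1 : ℝ)) y|) = E.indicator 1 := by
    ext y
    by_cases hy : y ∈ E <;> simp [hy]
  rw [h1, lintegral_indicator_one hE, Measure.restrict_apply hE]

lemma prod_le_maxOp_indicator_pi {n : ℕ} {B : Set (BoxInterval n)} {A : Fin n → Set ℝ}
    (hA : ∀ j, MeasurableSet (A j)) {R : BoxInterval n} (hR : R ∈ B) {x : Fin n → ℝ}
    (hx : x ∈ R.toSet) {δ : Fin n → ℝ≥0∞}
    (hδ : ∀ j, volume (A j ∩ Icc (R.a j) (R.b j)) = δ j * volume (Icc (R.a j) (R.b j))) :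
    ∏ j, δ j ≤ maxOp B ((univ.pi A).indicator fun _ => 1) x := by
  refine le_trans (le_of_eq ?_) (measure_inter_div_le_maxOp (MeasurableSet.univ_pi hA) hR hx)
  rw [BoxInterval.toSet, ← pi_inter_distrib, volume_pi_pi, volume_pi_pi]
  simp_rw [hδ, Finset.prod_mul_distrib]
  rw [ENNReal.mul_div_cancel_right]
  · exact Finset.prod_ne_zero_iff.2 fun j _ => by simp [Real.volume_Icc, R.hab j]
  · exact ENNReal.prod_ne_top fun j _ => by simp [Real.volume_Icc]

lemma pi_cantorWindows_subset_levelSet {n : ℕ} {B : Set (BoxInterval n)}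
    {p : Fin n → ℕ → ℤ} (hp : ∀ c, StrictMono (p c)) {k : ℕ} {d : Fin n → ℕ}
    (hd : ∀ c, d c ≤ k)
    (hB : ∀ τ, (dyadicCornerBox fun c => p c (d c)).translate τ ∈ B) :
    (univ.pi fun c => cantorWindows (p c) k (d c)) ⊆
      {x | ∏ c, ENNReal.ofReal (2 ^ (-(d c : ℤ))) ≤
        maxOp B ((univ.pi fun c => cantorSet (p c) k).indicator fun _ => 1) x} := by
  intro x hx
  choose τ hxτ hτ using fun c => exists_window_of_mem_cantorWindows (hp c) (hd c) (hx c trivial)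
  refine prod_le_maxOp_indicator_pi (fun c => measurableSet_cantorSet k) (hB τ)
    (by rw [toSet_translate_dyadicCornerBox]; exact fun c _ => hxτ c) fun c => ?_
  rw [Icc_translate_dyadicCornerBox, hτ c, measure_vadd, volume_Icc_two_zpow,
    ← ENNReal.ofReal_mul (by positivity), ← zpow_add₀ two_ne_zero]
  congr 2
  ring

lemma exists_perm_strictMono_strictAnti {k : ℕ} (e : Fin k → Fin 2 → ℤ)
    (he : ∀ i j, i ≠ j → ¬e i ≤ e j) :
    ∃ σ : Equiv.Perm (Fin k),
      StrictMono (fun i => e (σ i) 0) ∧ StrictAnti (fun i => e (σ i) 1) := by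
  have hswap : ∀ i j, i ≠ j → e i 0 ≤ e j 0 → e j 1 < e i 1 := fun i j hij h0 =>
    lt_of_not_ge fun h1 => he i j hij (Pi.le_def.2 (Fin.forall_fin_two.2 ⟨h0, h1⟩))
  have hinj : Function.Injective fun i => e i 0 := fun i j hij => by
    by_contra hne
    exact (hswap i j hne hij.le).not_gt (hswap j i (Ne.symm hne) hij.ge)
  set σ := Tuple.sort fun i => e i 0
  have hmono : StrictMono fun i => e (σ i) 0 :=
    (Tuple.monotone_sort _).strictMono_of_injective (hinj.comp σ.injective)
  exact ⟨σ, hmono, fun i j hij => hswap _ _ (σ.injective.ne hij.ne) (hmono hij).le⟩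

lemma ISProperty.exists_strictMono_strictAnti {B : Set (BoxInterval 2)} (h : ISProperty B)
    (k : ℕ) : ∃ p q : Fin (k + 1) → ℤ, StrictMono p ∧ StrictAnti q ∧
      ∀ i j, i ≤ j → dyadicCornerBox ![p i, q j] ∈ B := by
  obtain ⟨R, -, ha, hb, hinc, hinter⟩ := h k
  choose e he using hb
  have hR : ∀ i, R i = dyadicCornerBox (e i) := fun i =>
    BoxInterval.ext (ha i) (funext (he i))
  have hanti : ∀ i j, i ≠ j → ¬e i ≤ e j := fun i j hij hle =>
    hinc i j hij 0 <| by
      rw [BoxInterval.translate_zero, hR, hR]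
      exact toSet_dyadicCornerBox_mono hle
  obtain ⟨σ, hmono, hanti'⟩ := exists_perm_strictMono_strictAnti e hanti
  refine ⟨_, _, hmono, hanti', fun i j hij => ?_⟩
  obtain ⟨Q, hQ, hQeq⟩ := hinter (σ i) (σ j)
  have hinf : e (σ i) ⊓ e (σ j) = ![e (σ i) 0, e (σ j) 1] := by
    funext l
    fin_cases l
    · exact inf_eq_left.2 (hmono.monotone hij)
    · exact inf_eq_right.2 (hanti'.antitone hij)
  rw [hR, hR, toSet_dyadicCornerBox_inter, hinf] at hQeq
  exact BoxInterval.toSet_injective hQeq ▸ hQ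

lemma exists_strictMono_dyadicCornerBox_mem {B : Set (BoxInterval 1)}
    (htrans : ∀ I ∈ B, ∀ v : Fin 1 → ℝ, I.translate v ∈ B)
    (hinf : {l : ℝ | ∃ I ∈ B, I.side 0 = l}.Infinite)
    (hdyadic : {l : ℝ | ∃ I ∈ B, I.side 0 = l} ⊆ {x | ∃ s : ℤ, x = (2 : ℝ) ^ s})
    (k : ℕ) :
    ∃ s : Fin (k + 1) → ℤ, StrictMono s ∧ ∀ l, dyadicCornerBox ![s l] ∈ B := by
  set Z : Set ℤ := {z | dyadicCornerBox ![z] ∈ B}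
  have hsides : {l : ℝ | ∃ I ∈ B, I.side 0 = l} ⊆ (fun z : ℤ => (2 : ℝ) ^ z) '' Z := by
    rintro _ ⟨I, hI, rfl⟩
    obtain ⟨z, hz⟩ := hdyadic ⟨I, hI, rfl⟩
    refine ⟨z, ?_, hz.symm⟩
    have : I.translate (fun _ => -I.a 0) = dyadicCornerBox ![z] := by
      refine BoxInterval.ext (funext fun l => ?_) (funext fun l => ?_) <;>
        fin_cases l <;> simp [BoxInterval.translate, dyadicCornerBox]
      rw [← hz, BoxInterval.side]
      ring
    show dyadicCornerBox ![z] ∈ B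
    exact this ▸ htrans I hI _
  have hZ : Z.Infinite := fun hfin => hinf ((hfin.image _).subset hsides)
  obtain ⟨t, htZ, hcard⟩ := hZ.exists_subset_card_eq (k + 1)
  exact ⟨fun l => t.orderEmbOfFin hcard l, (t.orderEmbOfFin hcard).strictMono,
    fun l => htZ (t.orderEmbOfFin_mem hcard l)⟩

lemma exists_strictMono_nat_extension {k : ℕ} {f : Fin (k + 1) → ℤ} (hf : StrictMono f) :
    ∃ g : ℕ → ℤ, StrictMono g ∧ ∀ i : Fin (k + 1), g i = f i := by
  refine ⟨fun n => if h : n < k + 1 then f ⟨n, h⟩ else f (Fin.last k) + (n - k),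
    strictMono_nat_of_lt_succ fun n => ?_, fun i => dif_pos i.isLt⟩
  rcases lt_trichotomy (n + 1) (k + 1) with h | h | h
  · simp only [dif_pos h, dif_pos (Nat.lt_of_succ_lt h)]
    exact hf (Fin.mk_lt_mk.2 (Nat.lt_succ_self n))
  · have hn : n = k := by omega
    subst hn
    simp [Fin.last]
  · simp only [dif_neg (by omega : ¬n < k + 1), dif_neg h.not_gt]
    push_cast
    linarith

section ProductBasis

variable {B1 : Set (BoxInterval 2)} {B2 : Set (BoxInterval 1)} {p : Fin 3 → ℕ → ℤ} {k : ℕ}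

lemma cantorBlock_subset_levelSet (hB1 : ∀ R ∈ B1, ∀ v, R.translate v ∈ B1)
    (hB2 : ∀ I ∈ B2, ∀ v, I.translate v ∈ B2) (hp : ∀ c, StrictMono (p c)) {i j : ℕ}
    (hij : i + j ≤ k) (h1 : dyadicCornerBox ![p 0 i, p 1 j] ∈ B1)
    (h2 : dyadicCornerBox ![p 2 (k - i - j)] ∈ B2) :
    univ.pi ![cantorWindows (p 0) k i, cantorWindows (p 1) k j,
        cantorWindows (p 2) k (k - i - j)] ⊆
      {x | ENNReal.ofReal (2 ^ (-(k : ℤ))) ≤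
        maxOp (prodBasis B1 B2) ((univ.pi fun c => cantorSet (p c) k).indicator fun _ => 1) x} := by
  set d : Fin 3 → ℕ := ![i, j, k - i - j]
  have hd : ∀ c, d c ≤ k := by
    intro c
    fin_cases c <;> simp [d] <;> omega
  have hbox : dyadicCornerBox (fun c => p c (d c)) =
      prodBox (dyadicCornerBox ![p 0 i, p 1 j]) (dyadicCornerBox ![p 2 (k - i - j)]) := by
    rw [prodBox_dyadicCornerBox]
    congr 1
    funext c
    fin_cases c <;> rfl
  have hprod : ∏ c, ENNReal.ofReal (2 ^ (-(d c : ℤ))) = ENNReal.ofReal (2 ^ (-(k : ℤ))) := by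
    rw [Fin.prod_univ_three, ← ENNReal.ofReal_mul (by positivity),
      ← ENNReal.ofReal_mul (by positivity), ← zpow_add₀ two_ne_zero,
      ← zpow_add₀ two_ne_zero]
    congr 2
    simp only [d, Matrix.cons_val]
    omega
  have hsub := pi_cantorWindows_subset_levelSet hp hd
    fun τ => hbox ▸ translate_prodBox_mem_prodBasis hB1 hB2 h1 h2 τ
  rw [hprod] at hsub
  convert hsub using 2
  funext c
  fin_cases c <;> rfl

lemma volume_cantorProduct (hp : ∀ c, StrictMono (p c)) (k : ℕ) :
    volume (univ.pi fun c => cantorSet (p c) k) =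
      ENNReal.ofReal (2 ^ (p 0 k + p 1 k + p 2 k - 3 * k)) := by
  rw [volume_pi_pi, Fin.prod_univ_three, volume_cantorSet (hp 0), volume_cantorSet (hp 1),
    volume_cantorSet (hp 2), ← ENNReal.ofReal_mul (by positivity),
    ← ENNReal.ofReal_mul (by positivity), ← zpow_add₀ two_ne_zero,
    ← zpow_add₀ two_ne_zero]
  congr 2
  ring

lemma volume_cantorShellBlock_ge (hp : ∀ c, StrictMono (p c)) {i j : ℕ} (hij : i + j ≤ k) :
    ENNReal.ofReal (2 ^ ((k : ℤ) - 2)) * volume (univ.pi fun c => cantorSet (p c) k) ≤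
      volume (univ.pi ![disjointed (cantorWindows (p 0) k) i,
        disjointed (cantorWindows (p 1) k) j, cantorWindows (p 2) k (k - i - j)]) := by
  calc ENNReal.ofReal (2 ^ ((k : ℤ) - 2)) * volume (univ.pi fun c => cantorSet (p c) k)
      = ENNReal.ofReal (2 ^ (p 0 k - k + i - 1)) * ENNReal.ofReal (2 ^ (p 1 k - k + j - 1)) *
          ENNReal.ofReal (2 ^ (p 2 k - k + (k - i - j : ℕ))) := by
        rw [volume_cantorProduct hp, ← ENNReal.ofReal_mul (by positivity),
          ← ENNReal.ofReal_mul (by positivity), ← ENNReal.ofReal_mul (by positivity),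
          ← zpow_add₀ two_ne_zero, ← zpow_add₀ two_ne_zero, ← zpow_add₀ two_ne_zero]
        congr 2
        push_cast [Nat.sub_sub, hij]
        ring
    _ ≤ volume (disjointed (cantorWindows (p 0) k) i) *
          volume (disjointed (cantorWindows (p 1) k) j) *
          volume (cantorWindows (p 2) k (k - i - j)) := by
        rw [volume_cantorWindows (hp 2) (by omega)]
        gcongr
        · exact volume_disjointed_cantorWindows_ge (hp 0) (by omega)
        · exact volume_disjointed_cantorWindows_ge (hp 1) (by omega)
    _ = _ := by
        rw [volume_pi_pi, Fin.prod_univ_three]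
        rfl

lemma volume_levelSet_cantorProduct_ge (hB1 : ∀ R ∈ B1, ∀ v, R.translate v ∈ B1)
    (hB2 : ∀ I ∈ B2, ∀ v, I.translate v ∈ B2) (hp : ∀ c, StrictMono (p c))
    (h1 : ∀ i j, i + j ≤ k → dyadicCornerBox ![p 0 i, p 1 j] ∈ B1)
    (h2 : ∀ l ≤ k, dyadicCornerBox ![p 2 l] ∈ B2) :
    ((k / 2 + 1) ^ 2 : ℕ) * ENNReal.ofReal (2 ^ ((k : ℤ) - 2)) *
        volume (univ.pi fun c => cantorSet (p c) k) ≤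
      volume {x | ENNReal.ofReal (2 ^ (-(k : ℤ))) ≤
        maxOp (prodBasis B1 B2) ((univ.pi fun c => cantorSet (p c) k).indicator fun _ => 1) x} := by
  set T := Finset.range (k / 2 + 1) ×ˢ Finset.range (k / 2 + 1)
  set Q : ℕ × ℕ → Set (Fin 3 → ℝ) := fun ij =>
    univ.pi ![disjointed (cantorWindows (p 0) k) ij.1,
      disjointed (cantorWindows (p 1) k) ij.2, cantorWindows (p 2) k (k - ij.1 - ij.2)]
  have hT : ∀ ij ∈ T, ij.1 + ij.2 ≤ k := fun ij hij => by
    simp only [T, Finset.mem_product, Finset.mem_range] at hij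
    omega
  have hQm : ∀ ij, MeasurableSet (Q ij) := fun ij => MeasurableSet.univ_pi fun c => by
    fin_cases c
    exacts [.disjointed (measurableSet_cantorWindows k) _,
      .disjointed (measurableSet_cantorWindows k) _, measurableSet_cantorWindows k _]
  have hQdisj : (T : Set (ℕ × ℕ)).PairwiseDisjoint Q := by
    rintro ⟨i, j⟩ - ⟨i', j'⟩ - hne
    refine disjoint_univ_pi.2 ?_
    by_cases hi : i = i'
    · exact ⟨1, disjoint_disjointed _ fun hj => hne (Prod.ext hi hj)⟩
    · exact ⟨0, disjoint_disjointed _ hi⟩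
  calc ((k / 2 + 1) ^ 2 : ℕ) * ENNReal.ofReal (2 ^ ((k : ℤ) - 2)) *
        volume (univ.pi fun c => cantorSet (p c) k)
      = ∑ _ij ∈ T, ENNReal.ofReal (2 ^ ((k : ℤ) - 2)) *
          volume (univ.pi fun c => cantorSet (p c) k) := by
        rw [Finset.sum_const, nsmul_eq_mul, Finset.card_product, Finset.card_range, sq, mul_assoc]
    _ ≤ ∑ ij ∈ T, volume (Q ij) :=
        Finset.sum_le_sum fun ij hij => volume_cantorShellBlock_ge hp (hT ij hij)
    _ = volume (⋃ ij ∈ T, Q ij) := (measure_biUnion_finset hQdisj fun ij _ => hQm ij).symm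
    _ ≤ _ := measure_mono <| iUnion₂_subset fun ij hij =>
        (pi_mono fun c _ => by fin_cases c <;> simp [disjointed_subset]).trans
          (cantorBlock_subset_levelSet hB1 hB2 hp (hT ij hij) (h1 _ _ (hT ij hij))
            (h2 _ (by omega)))

end ProductBasis

theorem exists_levelSet_volume_ge {B1 : Set (BoxInterval 2)} {B2 : Set (BoxInterval 1)}
    (hB1 : ∀ R ∈ B1, ∀ v, R.translate v ∈ B1) (his : ISProperty B1)
    (hB2trans : ∀ I ∈ B2, ∀ v : Fin 1 → ℝ, I.translate v ∈ B2)
    (hB2inf : {l : ℝ | ∃ I ∈ B2, I.side 0 = l}.Infinite)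
    (hB2dyadic : {l : ℝ | ∃ I ∈ B2, I.side 0 = l} ⊆ {x | ∃ s : ℤ, x = (2 : ℝ) ^ s})
    (k : ℕ) :
    ∃ E : Set (Fin 3 → ℝ), Bornology.IsBounded E ∧ MeasurableSet E ∧ 0 < volume E ∧
      ((k / 2 + 1) ^ 2 : ℕ) * ENNReal.ofReal (2 ^ ((k : ℤ) - 2)) * volume E ≤
        volume {x | ENNReal.ofReal (2 ^ (-(k : ℤ))) ≤
          maxOp (prodBasis B1 B2) (E.indicator fun _ => 1) x} := by
  obtain ⟨p, q, hp, hq, hpq⟩ := his.exists_strictMono_strictAnti k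
  obtain ⟨s, hs, hsB⟩ := exists_strictMono_dyadicCornerBox_mem hB2trans hB2inf hB2dyadic k
  obtain ⟨P, hP, hPp⟩ := exists_strictMono_nat_extension hp
  obtain ⟨Q, hQ, hQq⟩ := exists_strictMono_nat_extension (hq.comp Fin.rev_strictAnti)
  obtain ⟨S, hS, hSs⟩ := exists_strictMono_nat_extension hs
  have hPQS : ∀ c, StrictMono (![P, Q, S] c) := by
    intro c
    fin_cases c
    exacts [hP, hQ, hS]
  refine ⟨univ.pi fun c => cantorSet (![P, Q, S] c) k,
    .pi fun c => (Metric.isBounded_Icc _ _).subset (cantorSet_subset_Icc (hPQS c) k),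
    .univ_pi fun c => measurableSet_cantorSet k,
    by rw [volume_cantorProduct hPQS]; exact ENNReal.ofReal_pos.2 (by positivity),
    volume_levelSet_cantorProduct_ge hB1 hB2trans hPQS (fun i j hij => ?_) fun l hl => ?_⟩
  · have hi := hPp ⟨i, by omega⟩
    have hj := hQq ⟨j, by omega⟩
    simp only [Function.comp_apply] at hi hj
    simp only [Matrix.cons_val_zero, Matrix.cons_val_one, hi, hj]
    exact hpq _ _ (by rw [Fin.le_def, Fin.val_rev]; simp only; omega)
  · have hl' := hSs ⟨l, by omega⟩
    simp only [Matrix.cons_val_two, Matrix.tail_cons, Matrix.head_cons, hl']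
    exact hsB _

lemma exists_nat_lt_le_add_one {L : ℝ} (hL : 0 < L) :
    ∃ k : ℕ, (k : ℝ) < L ∧ L ≤ k + 1 := by
  have hceil : 0 < ⌈L⌉₊ := Nat.ceil_pos.2 hL
  refine ⟨⌈L⌉₊ - 1, ?_, ?_⟩ <;> rw [Nat.cast_sub hceil, Nat.cast_one]
  · linarith [Nat.ceil_lt_add_one hL.le]
  · linarith [Nat.le_ceil L]

lemma exists_nat_two_zpow_bounds {α : ℝ} (hα0 : 0 < α) (hα1 : α < 1) : ∃ k : ℕ,
    α < 2 ^ (-(k : ℤ)) ∧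
      1 / 128 * (1 / α) * (1 + Real.logb 2 (1 / α)) ^ 2 ≤
        ((k / 2 + 1) ^ 2 : ℕ) * 2 ^ ((k : ℤ) - 2) := by
  set L := Real.logb 2 (1 / α)
  have hL : 0 < L := Real.logb_pos one_lt_two (one_lt_one_div hα0 hα1)
  have h2L : (2 : ℝ) ^ L = 1 / α := Real.rpow_logb two_pos (by norm_num) (by positivity)
  obtain ⟨k, hkL, hLk⟩ := exists_nat_lt_le_add_one hL
  refine ⟨k, ?_, ?_⟩
  · calc α = 2 ^ (-L) := by rw [Real.rpow_neg two_pos.le, h2L, one_div, inv_inv]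
      _ < 2 ^ ((-(k : ℤ) : ℤ) : ℝ) := by
        rw [Real.rpow_lt_rpow_left_iff one_lt_two]
        push_cast
        linarith
      _ = 2 ^ (-(k : ℤ)) := Real.rpow_intCast _ _
  · have hα : 1 / α ≤ 8 * 2 ^ ((k : ℤ) - 2) := by
      calc 1 / α = 2 ^ L := h2L.symm
        _ ≤ 2 ^ (((k + 1 : ℤ)) : ℝ) := by
          rw [Real.rpow_le_rpow_left_iff one_lt_two]
          push_cast
          exact hLk
        _ = 8 * 2 ^ ((k : ℤ) - 2) := by
          rw [Real.rpow_intCast, show (k : ℤ) + 1 = (k : ℤ) - 2 + 3 by ring,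
            zpow_add₀ two_ne_zero]
          norm_num
          ring
    have hk2 : (k : ℝ) + 2 ≤ 4 * ((k / 2 : ℕ) + 1 : ℝ) := by
      have : k ≤ 2 * (k / 2) + 1 := by omega
      have : (k : ℝ) ≤ 2 * (k / 2 : ℕ) + 1 := by exact_mod_cast this
      linarith
    have hlog : (1 + L) ^ 2 ≤ 16 * ((k / 2 : ℕ) + 1 : ℝ) ^ 2 := by
      nlinarith
    push_cast
    calc 1 / 128 * (1 / α) * (1 + L) ^ 2
        ≤ 1 / 128 * (8 * 2 ^ ((k : ℤ) - 2)) * (16 * ((k / 2 : ℕ) + 1 : ℝ) ^ 2) := by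
          gcongr
      _ = _ := by ring

/-- Application VII (estimate part): sharp weak type `L(1+log⁺L)²` lower bound for the
product basis `B₁ × B₂` where `B₁` has the (is)-property. -/
theorem statement17 (B1 : Set (BoxInterval 2)) (hB1 : IsRareBasis B1)
    (his : ISProperty B1)
    (B2 : Set (BoxInterval 1))
    (hB2trans : ∀ I ∈ B2, ∀ v : Fin 1 → ℝ, I.translate v ∈ B2)
    (hB2inf : {l : ℝ | ∃ I ∈ B2, I.side 0 = l}.Infinite)
    (hB2dyadic : {l : ℝ | ∃ I ∈ B2, I.side 0 = l} ⊆ {x | ∃ s : ℤ, x = (2:ℝ) ^ s}) :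
    ∃ c : ℝ, 0 < c ∧ ∀ α : ℝ, 0 < α → α < 1 →
      ∃ E : Set (Fin 3 → ℝ), Bornology.IsBounded E ∧ MeasurableSet E ∧ 0 < volume E ∧
        ENNReal.ofReal (c * (1 / α) * (1 + Real.logb 2 (1 / α)) ^ 2) * volume E ≤
          volume {x | ENNReal.ofReal α <
            maxOp (prodBasis B1 B2) (E.indicator fun _ => (1:ℝ)) x} := by
  refine ⟨1 / 128, by norm_num, fun α hα0 hα1 => ?_⟩
  obtain ⟨k, hαk, hbound⟩ := exists_nat_two_zpow_bounds hα0 hα1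
  obtain ⟨E, hEb, hEm, hE0, hE⟩ :=
    exists_levelSet_volume_ge hB1.2 his hB2trans hB2inf hB2dyadic k
  refine ⟨E, hEb, hEm, hE0, ?_⟩
  calc ENNReal.ofReal (1 / 128 * (1 / α) * (1 + Real.logb 2 (1 / α)) ^ 2) * volume E
      ≤ ((k / 2 + 1) ^ 2 : ℕ) * ENNReal.ofReal (2 ^ ((k : ℤ) - 2)) * volume E := by
        rw [← ENNReal.ofReal_natCast, ← ENNReal.ofReal_mul (by positivity)]
        gcongr
    _ ≤ _ := hE
    _ ≤ _ := measure_mono fun x hx =>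
        ((ENNReal.ofReal_lt_ofReal_iff (by positivity)).2 hαk).trans_le hx
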